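/- arXiv:1810.00508 — 2 statements merged into one kernel-verified Lean document; each statement's English description precedes it below -/
import Mathlib

section
/- If P and Q are lattice polytopes in ℝ² whose Minkowski sum P + Q is contained in a triangle Δ and contains an edge E of Δ whose only lattice points are its two endpoints, then P or Q is a single point. -/
/-!
Let `f` be a linear functional that is minimal on the triangle exactly along the edge `[A, B]`.
The minimum of `f` on `P + Q` is the sum of its minima on `P` and `Q`, so the sum of the sets of
lattice points where `f` is minimal on `P` and on `Q` consists of lattice points of `[A, B]`,
i.e. lies in `{A, B}`. By Cauchy–Davenport in a torsion-free group, one of the two sets of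
minimisers, say that of `P`, is a single point `p`. Then `A - p` and `B - p` lie in `Q`, so for
every vertex `z` of `P` the triangle contains the translate of `[A, B]` by `z - p`, which
forces `z = p`.
-/

open Pointwise

noncomputable section

/-- Laurent polynomials in two variables over `K`. -/
abbrev LP (K : Type*) [Field K] := AddMonoidAlgebra K (ℤ × ℤ)

/-- Embedding of lattice points into the real plane. -/
def toR : ℤ × ℤ → ℝ × ℝ := fun p => ((p.1 : ℝ), (p.2 : ℝ))

/-- The Newton polytope of a Laurent polynomial: convex hull of its exponent vectors. -/
def newtonPolytope {K : Type*} [Field K] (f : LP K) : Set (ℝ × ℝ) :=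
  convexHull ℝ (toR '' (f.coeff.support : Set (ℤ × ℤ)))

open Module

lemma toR_add (p q : ℤ × ℤ) : toR (p + q) = toR p + toR q := by
  simp [toR]

lemma Set.subsingleton_or_subsingleton_of_add_subset_pair {G : Type*} [AddGroup G]
    [IsAddTorsionFree G] {s t : Set G} (hs : s.Finite) (ht : t.Finite) (hs₀ : s.Nonempty)
    (ht₀ : t.Nonempty) {a b : G} (hst : s + t ⊆ {a, b}) : s.Subsingleton ∨ t.Subsingleton := by
  classical
  lift s to Finset G using hs
  lift t to Finset G using ht
  rw [← Finset.coe_add, ← Finset.coe_pair, Finset.coe_subset] at hst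
  have := (cauchy_davenport_of_isAddTorsionFree (Finset.coe_nonempty.1 hs₀)
    (Finset.coe_nonempty.1 ht₀)).trans ((Finset.card_le_card hst).trans Finset.card_le_two)
  simp only [← Finset.card_le_one_iff_subsingleton]
  omega

section LinearBound

variable {E : Type*} [AddCommGroup E] [Module ℝ E] {s : Set E} {f : E →ₗ[ℝ] ℝ} {m : ℝ}

lemma le_apply_of_mem_convexHull (hs : ∀ z ∈ s, m ≤ f z) {x : E} (hx : x ∈ convexHull ℝ s) :
    m ≤ f x :=
  convexHull_min hs ((convex_Ici m).linear_preimage f) hx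

lemma add_le_apply_of_mem_convexHull_add {t : Set E} {n : ℝ} (hs : ∀ z ∈ s, m ≤ f z)
    (ht : ∀ z ∈ t, n ≤ f z) {x : E} (hx : x ∈ convexHull ℝ s + convexHull ℝ t) :
    m + n ≤ f x := by
  obtain ⟨y, hy, z, hz, rfl⟩ := hx
  rw [map_add]
  exact add_le_add (le_apply_of_mem_convexHull hs hy) (le_apply_of_mem_convexHull ht hz)

lemma mem_convexHull_sep_le (hs : ∀ z ∈ s, m ≤ f z) {x : E} (hx : x ∈ convexHull ℝ s)
    (hfx : f x ≤ m) : x ∈ convexHull ℝ {z ∈ s | f z ≤ m} := by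
  classical
  rw [convexHull_eq] at hx
  obtain ⟨ι, t, w, z, hw₀, hw₁, hz, rfl⟩ := hx
  have hterm : ∀ i ∈ t, 0 ≤ w i * (f (z i) - m) := fun i hi =>
    mul_nonneg (hw₀ i hi) (sub_nonneg.2 (hs _ (hz i hi)))
  have hexcess : ∑ i ∈ t, w i * (f (z i) - m) = 0 := by
    refine le_antisymm ?_ (Finset.sum_nonneg hterm)
    rw [Finset.centerMass_eq_of_sum_1 _ _ hw₁, map_sum] at hfx
    simp only [mul_sub, Finset.sum_sub_distrib, ← Finset.sum_mul, hw₁, one_mul]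
    simpa [smul_eq_mul] using hfx
  have hface := (Finset.sum_eq_zero_iff_of_nonneg hterm).1 hexcess
  rw [← Finset.centerMass_filter_ne_zero]
  refine Finset.centerMass_mem_convexHull _ (fun i hi => hw₀ i (Finset.mem_filter.1 hi).1) ?_ ?_
  · rw [Finset.sum_filter_ne_zero, hw₁]
    exact one_pos
  · intro i hi
    obtain ⟨hit, hwi⟩ := Finset.mem_filter.1 hi
    have := (mul_eq_zero.1 (hface i hit)).resolve_left hwi
    exact ⟨hz i hit, by linarith⟩

end LinearBound

lemma AffineBasis.eq_zero_of_add_mem_convexHull {ι E : Type*} [Fintype ι] [AddCommGroup E]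
    [Module ℝ E] (b : AffineBasis ι ℝ E) {i j : ι} (hij : i ≠ j) {v : E}
    (hi : b i + v ∈ convexHull ℝ (Set.range b)) (hj : b j + v ∈ convexHull ℝ (Set.range b)) :
    v = 0 := by
  rw [b.convexHull_eq_nonneg_coord] at hi hj
  have hcoord : ∀ k x, b.coord k (x + v) = (b.coord k).linear v + b.coord k x := fun k x => by
    rw [add_comm x v]
    exact (b.coord k).map_vadd x v
  have hnonneg : ∀ k, 0 ≤ (b.coord k).linear v := by
    intro k
    by_cases hk : k = i
    · subst hk
      simpa [hcoord, b.coord_apply_ne hij] using hj k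
    · simpa [hcoord, b.coord_apply_ne hk] using hi k
  have hsum : ∑ k, (b.coord k).linear v = 0 := by
    have := b.sum_coord_apply_eq_one (b i + v)
    simp only [hcoord, Finset.sum_add_distrib, b.sum_coord_apply_eq_one] at this
    linarith
  have hzero := (Finset.sum_eq_zero_iff_of_nonneg fun k _ => hnonneg k).1 hsum
  refine add_eq_left.1 (b.ext_elem (q₁ := b i + v) (q₂ := b i) fun k => ?_)
  rw [hcoord, hzero k (Finset.mem_univ _), zero_add]

section Triangle

variable {E : Type*} [AddCommGroup E] [Module ℝ E] [FiniteDimensional ℝ E] {A B C : E}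

def triangleBasis (h2 : finrank ℝ E = 2) (htri : AffineIndependent ℝ ![A, B, C]) :
    AffineBasis (Fin 3) ℝ E :=
  ⟨![A, B, C], htri, by rw [htri.affineSpan_eq_top_iff_card_eq_finrank_add_one]; simp [h2]⟩

lemma range_triangleBasis (h2 : finrank ℝ E = 2) (htri : AffineIndependent ℝ ![A, B, C]) :
    Set.range (triangleBasis h2 htri) = {A, B, C} := by
  change Set.range ![A, B, C] = _
  simp only [Matrix.range_cons, Matrix.range_empty, Set.union_empty, Set.singleton_union]

lemma eq_zero_of_add_mem_triangle (h2 : finrank ℝ E = 2) (htri : AffineIndependent ℝ ![A, B, C])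
    {v : E} (hA : A + v ∈ convexHull ℝ {A, B, C}) (hB : B + v ∈ convexHull ℝ {A, B, C}) :
    v = 0 := by
  rw [← range_triangleBasis h2 htri] at hA hB
  exact (triangleBasis h2 htri).eq_zero_of_add_mem_convexHull (i := 0) (j := 1) (by decide) hA hB

lemma exists_linear_supporting_edge (h2 : finrank ℝ E = 2)
    (htri : AffineIndependent ℝ ![A, B, C]) :
    ∃ f : E →ₗ[ℝ] ℝ, f B = f A ∧
      ∀ x ∈ convexHull ℝ {A, B, C}, f A ≤ f x ∧ (f x ≤ f A → x ∈ segment ℝ A B) := by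
  set b := triangleBasis h2 htri
  have hb0 : b 0 = A := rfl
  have hb1 : b 1 = B := rfl
  have hA : b.coord 2 A = 0 := b.coord_apply_ne (i := 2) (j := 0) (by decide)
  have hB : b.coord 2 B = 0 := b.coord_apply_ne (i := 2) (j := 1) (by decide)
  have hcoord : ∀ x, (b.coord 2).linear x - (b.coord 2).linear A = b.coord 2 x := fun x => by
    rw [← map_sub, ← vsub_eq_sub, (b.coord 2).linearMap_vsub, hA, vsub_eq_sub, sub_zero]
  refine ⟨(b.coord 2).linear, by linarith [hcoord B], fun x hx => ?_⟩
  rw [← range_triangleBasis h2 htri, b.convexHull_eq_nonneg_coord] at hx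
  refine ⟨by linarith [hcoord x, hx 2], fun hxA => ?_⟩
  have hx2 : b.coord 2 x = 0 := by linarith [hcoord x, hx 2]
  have hsum := b.sum_coord_apply_eq_one x
  have hcomb := b.linear_combination_coord_eq_self x
  rw [Fin.sum_univ_three, hx2] at hsum hcomb
  rw [hb0, hb1, zero_smul, add_zero] at hcomb
  exact ⟨b.coord 0 x, b.coord 1 x, hx 0, hx 1, by linarith, hcomb⟩

lemma exists_convexHull_eq_singleton (h2 : finrank ℝ E = 2)
    (htri : AffineIndependent ℝ ![A, B, C]) {s t : Set E}
    (hsub : convexHull ℝ s + convexHull ℝ t ⊆ convexHull ℝ {A, B, C})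
    (hA : A ∈ convexHull ℝ s + convexHull ℝ t) (hB : B ∈ convexHull ℝ s + convexHull ℝ t)
    {f : E →ₗ[ℝ] ℝ} {m n : ℝ} (hs : ∀ z ∈ s, m ≤ f z) (ht : ∀ z ∈ t, n ≤ f z)
    (hfA : f A ≤ m + n) (hfB : f B ≤ m + n) (hmin : {z ∈ s | f z ≤ m}.Subsingleton) :
    ∃ p, convexHull ℝ s = {p} := by
  have hface : ∀ X ∈ convexHull ℝ s + convexHull ℝ t, f X ≤ m + n →
      ∃ x ∈ s, f x ≤ m ∧ X - x ∈ convexHull ℝ t := by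
    rintro _ ⟨x, hx, y, hy, rfl⟩ hX
    have hfx : f x ≤ m := by
      rw [map_add] at hX
      linarith [le_apply_of_mem_convexHull ht hy]
    have hxK := mem_convexHull_sep_le hs hx hfx
    obtain ⟨p, hp⟩ := convexHull_nonempty_iff.1 ⟨x, hxK⟩
    have hxp : x = p := by
      have : {z ∈ s | f z ≤ m} ⊆ {p} := fun z hz => hmin hz hp
      simpa using convexHull_mono this hxK
    subst hxp
    exact ⟨x, hp.1, hp.2, by rwa [add_sub_cancel_left]⟩
  obtain ⟨p, hps, hpm, hAp⟩ := hface A hA hfA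
  obtain ⟨p', hp's, hp'm, hBp'⟩ := hface B hB hfB
  rw [hmin ⟨hp's, hp'm⟩ ⟨hps, hpm⟩] at hBp'
  have hs_eq : s = {p} := by
    refine Set.eq_singleton_iff_unique_mem.2 ⟨hps, fun z hz => ?_⟩
    have htranslate : ∀ X, X - p ∈ convexHull ℝ t → X + (z - p) ∈ convexHull ℝ {A, B, C} :=
      fun X hX => by
        rw [add_sub_left_comm]
        exact hsub (Set.add_mem_add (subset_convexHull ℝ s hz) hX)
    exact sub_eq_zero.1 (eq_zero_of_add_mem_triangle h2 htri (htranslate A hAp) (htranslate B hBp'))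
  exact ⟨p, by rw [hs_eq, convexHull_singleton]⟩

end Triangle

/-- If the Minkowski sum of two lattice polytopes lies in a triangle and contains an
edge of the triangle whose only lattice points are its two endpoints, then one of the
two lattice polytopes is a single point. -/
theorem stmt1 (S T : Finset (ℤ × ℤ)) (hS : S.Nonempty) (hT : T.Nonempty)
    (a b : ℤ × ℤ) (c : ℝ × ℝ)
    (htri : AffineIndependent ℝ ![toR a, toR b, c])
    (hsub : convexHull ℝ (toR '' (S : Set (ℤ × ℤ))) + convexHull ℝ (toR '' (T : Set (ℤ × ℤ)))
              ⊆ convexHull ℝ {toR a, toR b, c})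
    (hE : segment ℝ (toR a) (toR b)
              ⊆ convexHull ℝ (toR '' (S : Set (ℤ × ℤ))) + convexHull ℝ (toR '' (T : Set (ℤ × ℤ))))
    (hedge : ∀ p : ℤ × ℤ, toR p ∈ segment ℝ (toR a) (toR b) → p = a ∨ p = b) :
    (∃ p : ℝ × ℝ, convexHull ℝ (toR '' (S : Set (ℤ × ℤ))) = {p}) ∨
    (∃ q : ℝ × ℝ, convexHull ℝ (toR '' (T : Set (ℤ × ℤ))) = {q}) := by
  obtain ⟨f, hfB, hΔ⟩ := exists_linear_supporting_edge (by simp) htri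
  set s := toR '' (S : Set (ℤ × ℤ))
  set t := toR '' (T : Set (ℤ × ℤ))
  have hsfin : s.Finite := S.finite_toSet.image toR
  have htfin : t.Finite := T.finite_toSet.image toR
  obtain ⟨p, hp, hpmin⟩ := s.exists_min_image f hsfin ((Finset.coe_nonempty.2 hS).image toR)
  obtain ⟨q, hq, hqmin⟩ := t.exists_min_image f htfin ((Finset.coe_nonempty.2 hT).image toR)
  have hpq : p + q ∈ convexHull ℝ s + convexHull ℝ t :=
    Set.add_mem_add (subset_convexHull ℝ s hp) (subset_convexHull ℝ t hq)
  have hA := hE (left_mem_segment ℝ _ _)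
  have hB := hE (right_mem_segment ℝ _ _)
  have hmin : f p + f q = f (toR a) := le_antisymm
    (add_le_apply_of_mem_convexHull_add hpmin hqmin hA) (by simpa using (hΔ _ (hsub hpq)).1)
  have hedge' : {z ∈ s | f z ≤ f p} + {z ∈ t | f z ≤ f q} ⊆ {toR a, toR b} := by
    intro _ hxy
    obtain ⟨x, ⟨hx, hxp⟩, y, ⟨hy, hyq⟩, rfl⟩ := Set.mem_add.1 hxy
    have hseg := (hΔ _ (hsub (Set.add_mem_add (subset_convexHull ℝ s hx)
      (subset_convexHull ℝ t hy)))).2 (by rw [map_add, ← hmin]; exact add_le_add hxp hyq)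
    obtain ⟨u, -, rfl⟩ := hx
    obtain ⟨v, -, rfl⟩ := hy
    rw [← toR_add] at hseg ⊢
    rcases hedge _ hseg with rfl | rfl <;> simp
  rcases Set.subsingleton_or_subsingleton_of_add_subset_pair (hsfin.sep fun z => f z ≤ f p)
    (htfin.sep fun z => f z ≤ f q)
    ⟨p, hp, le_rfl⟩ ⟨q, hq, le_rfl⟩ hedge' with h | h
  · exact .inl (exists_convexHull_eq_singleton (by simp) htri hsub hA hB hpmin hqmin hmin.ge
      (hfB ▸ hmin.ge) h)
  · rw [add_comm] at hsub hA hB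
    exact .inr (exists_convexHull_eq_singleton (by simp) htri hsub hA hB hqmin hpmin
      (by rw [add_comm, hmin]) (by rw [add_comm, hmin, hfB]) h)
end
end

section
/- Define Laurent polynomials over ℚ by ξ₁ = 1 − 1/(xy), ξ₂ = 1/(xy) − 3 + x + y, and ξ_{m+2} = (x−1)ξ_{m+1} + x(y−1)²ξ_m. Then for every m ≥ 1, ξ_m vanishes to order at least m at (1,1). -/
/-!
Let `a = x - 1` and `b = y - 1`, generators of the ideal `I` of the point `(1,1)`, and
`u = 1/(xy)`. Then `ξ₁ = u (xy - 1) = u (x b + a) ∈ I` and `ξ₂ = (a + b) ξ₁ - u a b ∈ I²`.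
In the recursion `a ∈ I` and `x b² ∈ I²`, so `ξ_m ∈ I^m` and `ξ_{m+1} ∈ I^(m+1)` give
`ξ_{m+2} ∈ I^(m+2)`.
-/

noncomputable section

/-- The variable `x`. -/
def Xv (K : Type*) [Field K] : LP K := AddMonoidAlgebra.single ((1 : ℤ), (0 : ℤ)) 1

/-- The variable `y`. -/
def Yv (K : Type*) [Field K] : LP K := AddMonoidAlgebra.single ((0 : ℤ), (1 : ℤ)) 1

/-- The maximal ideal of the point `(1,1)` of the torus, generated by `x - 1` and `y - 1`.
A Laurent polynomial vanishes to order at least `m` at `(1,1)` iff it lies in the `m`-th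
power of this ideal. -/
def ptIdeal (K : Type*) [Field K] : Ideal (LP K) :=
  Ideal.span {Xv K - 1, Yv K - 1}

/-- The Laurent polynomial `ξ₁ = 1 - 1/(xy)`. -/
def xiOne (K : Type*) [Field K] : LP K :=
  1 - AddMonoidAlgebra.single ((-1 : ℤ), (-1 : ℤ)) 1

/-- The Laurent polynomial `ξ₂ = 1/(xy) - 3 + x + y`. -/
def xiTwo (K : Type*) [Field K] : LP K :=
  AddMonoidAlgebra.single ((-1 : ℤ), (-1 : ℤ)) 1 - 3 + Xv K + Yv K

/-- The sequence `ξ₁ = 1 − 1/(xy)`, `ξ₂ = 1/(xy) − 3 + x + y`,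
`ξ_{m+2} = (x−1)ξ_{m+1} + x(y−1)²ξ_m`, indexed here so that `xiB m = ξ_{m+1}`. -/
def xiB : ℕ → LP ℚ
  | 0 => xiOne ℚ
  | 1 => xiTwo ℚ
  | n + 2 => (Xv ℚ - 1) * xiB (n + 1) + Xv ℚ * (Yv ℚ - 1) ^ 2 * xiB n

section

variable {K : Type*} [Field K]

lemma Xv_sub_one_mem_ptIdeal : Xv K - 1 ∈ ptIdeal K :=
  Ideal.subset_span (Set.mem_insert _ _)

lemma Yv_sub_one_mem_ptIdeal : Yv K - 1 ∈ ptIdeal K :=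
  Ideal.subset_span (Set.mem_insert_of_mem _ rfl)

lemma single_neg_one_mul_Xv_mul_Yv :
    AddMonoidAlgebra.single ((-1 : ℤ), (-1 : ℤ)) (1 : K) * (Xv K * Yv K) = 1 := by
  simp only [Xv, Yv, AddMonoidAlgebra.single_mul_single, AddMonoidAlgebra.one_def,
    ← Prod.mk_zero_zero]
  norm_num

lemma xiOne_eq : xiOne K =
    AddMonoidAlgebra.single ((-1 : ℤ), (-1 : ℤ)) 1 * (Xv K * (Yv K - 1) + (Xv K - 1)) := by
  rw [xiOne]
  linear_combination -(single_neg_one_mul_Xv_mul_Yv (K := K))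

lemma xiTwo_eq : xiTwo K = ((Xv K - 1) + (Yv K - 1)) * xiOne K -
    AddMonoidAlgebra.single ((-1 : ℤ), (-1 : ℤ)) 1 * ((Xv K - 1) * (Yv K - 1)) := by
  rw [xiTwo, xiOne_eq]
  linear_combination (3 - Xv K - Yv K) * single_neg_one_mul_Xv_mul_Yv (K := K)

lemma xiOne_mem_ptIdeal : xiOne K ∈ ptIdeal K := by
  rw [xiOne_eq]
  exact Ideal.mul_mem_left _ _ <|
    add_mem (Ideal.mul_mem_left _ _ Yv_sub_one_mem_ptIdeal) Xv_sub_one_mem_ptIdeal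

lemma xiTwo_mem_ptIdeal_sq : xiTwo K ∈ ptIdeal K ^ 2 := by
  rw [xiTwo_eq, sq]
  refine sub_mem (Ideal.mul_mem_mul ?_ xiOne_mem_ptIdeal) (Ideal.mul_mem_left _ _ ?_)
  · exact add_mem Xv_sub_one_mem_ptIdeal Yv_sub_one_mem_ptIdeal
  · exact Ideal.mul_mem_mul Xv_sub_one_mem_ptIdeal Yv_sub_one_mem_ptIdeal

end

lemma xiB_mem_ptIdeal_pow : ∀ n : ℕ, xiB n ∈ ptIdeal ℚ ^ (n + 1)
  | 0 => by simpa only [xiB, zero_add, pow_one] using xiOne_mem_ptIdeal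
  | 1 => xiTwo_mem_ptIdeal_sq
  | n + 2 => by
    rw [xiB, mul_assoc]
    refine add_mem ?_ (Ideal.mul_mem_left _ _ ?_)
    · rw [pow_succ']
      exact Ideal.mul_mem_mul Xv_sub_one_mem_ptIdeal (xiB_mem_ptIdeal_pow (n + 1))
    · rw [show n + 2 + 1 = 2 + (n + 1) by ring, pow_add]
      exact Ideal.mul_mem_mul (Ideal.pow_mem_pow Yv_sub_one_mem_ptIdeal 2)
        (xiB_mem_ptIdeal_pow n)

/-- For every `m ≥ 1`, the Laurent polynomial `ξ_m` of the second family vanishes to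
order at least `m` at the point `(1,1)`. -/
theorem stmt18 (m : ℕ) (hm : 1 ≤ m) : xiB (m - 1) ∈ ptIdeal ℚ ^ m := by
  obtain ⟨n, rfl⟩ := Nat.exists_eq_add_of_le' hm
  exact xiB_mem_ptIdeal_pow n
end
end
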